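/- arXiv:1906.07922 — 4 statements merged into one kernel-verified Lean document; each statement's English description precedes it below -/
import Mathlib

section
/- Let H be a real inner product space and define the G-quadratic form q_G(u, v) := (3/2)‖u‖² − (3/2)⟪u, v⟫ + (1/2)‖v‖² for u, v ∈ H. Then for every sequence w : ℕ → H and every integer N ≥ 2: Σ_{n=1}^{N−1} ⟪(3/2)w_{n+1} − 2w_n + (1/2)w_{n−1}, (3/2)w_{n+1} − w_n + (1/2)w_{n−1}⟫ = q_G(w_N, w_{N−1}) − q_G(w_1, w_0) + (3/4) Σ_{n=1}^{N−1} ‖w_{n+1} − 2w_n + w_{n−1}‖². -/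
open scoped RealInnerProductSpace

lemma gForm_key {H : Type*} [NormedAddCommGroup H] [InnerProductSpace ℝ H]
    (a b c : H) :
    ⟪(3/2 : ℝ) • a - (2 : ℝ) • b + (1/2 : ℝ) • c,
      (3/2 : ℝ) • a - b + (1/2 : ℝ) • c⟫ =
    ((3/2) * ‖a‖ ^ 2 - (3/2) * ⟪a, b⟫ + (1/2) * ‖b‖ ^ 2) -
      ((3/2) * ‖b‖ ^ 2 - (3/2) * ⟪b, c⟫ + (1/2) * ‖c‖ ^ 2) +
      (3/4) * ‖a - (2 : ℝ) • b + c‖ ^ 2 := by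
  simp only [← real_inner_self_eq_norm_sq, inner_sub_left, inner_add_left,
    inner_sub_right, inner_add_right, real_inner_smul_left, real_inner_smul_right]
  rw [real_inner_comm b a, real_inner_comm c a, real_inner_comm c b]
  ring

/-- Telescoping G-norm energy identity for the time filtered backward Euler scheme. -/
theorem gForm_telescoping_identity
    {H : Type*} [NormedAddCommGroup H] [InnerProductSpace ℝ H]
    (w : ℕ → H) (N : ℕ) (hN : 2 ≤ N) :
    ∑ n ∈ Finset.Icc 1 (N - 1),
        ⟪(3/2 : ℝ) • w (n + 1) - (2 : ℝ) • w n + (1/2 : ℝ) • w (n - 1),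
          (3/2 : ℝ) • w (n + 1) - w n + (1/2 : ℝ) • w (n - 1)⟫ =
      ((3/2) * ‖w N‖ ^ 2 - (3/2) * ⟪w N, w (N - 1)⟫ + (1/2) * ‖w (N - 1)‖ ^ 2) -
        ((3/2) * ‖w 1‖ ^ 2 - (3/2) * ⟪w 1, w 0⟫ + (1/2) * ‖w 0‖ ^ 2) +
        (3/4) * ∑ n ∈ Finset.Icc 1 (N - 1),
          ‖w (n + 1) - (2 : ℝ) • w n + w (n - 1)‖ ^ 2 := by
  induction N with
  | zero => omega
  | succ M ih =>
    rcases Nat.lt_or_ge M 2 with hM | hM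
    · interval_cases M
      · omega
      · simp only [show (2:ℕ) - 1 = 1 from rfl, Finset.Icc_self, Finset.sum_singleton]
        simpa using gForm_key (w 2) (w 1) (w 0)
    · have hM1 : 1 ≤ M := by omega
      have e1 : M + 1 - 1 = M := rfl
      rw [e1]
      have hs : ∀ f : ℕ → ℝ, ∑ n ∈ Finset.Icc 1 M, f n
          = ∑ n ∈ Finset.Icc 1 (M - 1), f n + f M := by
        intro f
        have : M = (M - 1) + 1 := by omega
        rw [this, Finset.sum_Icc_succ_top (by omega)]
        congr 1
      rw [hs, hs, ih hM, gForm_key (w (M + 1)) (w M) (w (M - 1))]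
      ring
end

section
/- Let H be a real inner product space and define the G-bilinear pairing g((u, v), (p, q)) := (3/2)⟪u, p⟫ − (3/4)⟪u, q⟫ − (3/4)⟪v, p⟫ + (1/2)⟪v, q⟫ for u, v, p, q ∈ H. Then for all a, b, c, x, y, z ∈ H the following identity holds: ⟪(3/2)a − 2b + (1/2)c, (3/2)x − y + (1/2)z⟫ + ⟪(3/2)x − 2y + (1/2)z, (3/2)a − b + (1/2)c⟫ = [ g((a, b), (x, y)) − g((b, c), (y, z)) ] + [ g((x, y), (a, b)) − g((y, z), (b, c)) ] + (3/2)⟪a − 2b + c, x − 2y + z⟫. -/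
open scoped RealInnerProductSpace

/-- Polarized G-identity underlying discrete cross-helicity conservation. -/
theorem gForm_polarized_identity
    {H : Type*} [NormedAddCommGroup H] [InnerProductSpace ℝ H]
    (a b c x y z : H) :
    ⟪(3/2 : ℝ) • a - (2 : ℝ) • b + (1/2 : ℝ) • c,
        (3/2 : ℝ) • x - y + (1/2 : ℝ) • z⟫ +
      ⟪(3/2 : ℝ) • x - (2 : ℝ) • y + (1/2 : ℝ) • z,
        (3/2 : ℝ) • a - b + (1/2 : ℝ) • c⟫ =
      (((3/2) * ⟪a, x⟫ - (3/4) * ⟪a, y⟫ - (3/4) * ⟪b, x⟫ + (1/2) * ⟪b, y⟫) -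
          ((3/2) * ⟪b, y⟫ - (3/4) * ⟪b, z⟫ - (3/4) * ⟪c, y⟫ + (1/2) * ⟪c, z⟫)) +
        (((3/2) * ⟪x, a⟫ - (3/4) * ⟪x, b⟫ - (3/4) * ⟪y, a⟫ + (1/2) * ⟪y, b⟫) -
          ((3/2) * ⟪y, b⟫ - (3/4) * ⟪y, c⟫ - (3/4) * ⟪z, b⟫ + (1/2) * ⟪z, c⟫)) +
        (3/2) * ⟪a - (2 : ℝ) • b + c, x - (2 : ℝ) • y + z⟫ := by
  simp only [inner_sub_left, inner_add_left, inner_sub_right, inner_add_right,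
    inner_smul_left, inner_smul_right, real_inner_comm x a, real_inner_comm x b,
    real_inner_comm x c, real_inner_comm y a, real_inner_comm y b, real_inner_comm y c,
    real_inner_comm z a, real_inner_comm z b, real_inner_comm z c, RCLike.ofReal_real_eq_id,
    id_eq, conj_trivial]
  ring
end

section
/- There exists a constant C > 0 such that for every real Hilbert space H, every twice continuously differentiable function w : ℝ → H, every t ∈ ℝ and every h > 0: ‖(1/2)w(t + h) − w(t) + (1/2)w(t − h)‖² ≤ C h³ ∫_{t−h}^{t+h} ‖w''(s)‖² ds. -/
/-!
Two Taylor expansions about `t` with integral remainder cancel the first-order terms, so the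
second difference `w (t + h) - 2 w t + w (t - h)` is bounded in norm by `h ∫ ‖w''‖` over
`[t - h, t + h]`. Cauchy–Schwarz on that interval of length `2h` turns `(∫ ‖w''‖)²` into
`2h ∫ ‖w''‖²`, which gives the bound with `C = 1/2`.
-/

open intervalIntegral Set
open MeasureTheory (volume)

theorem sq_intervalIntegral_le_mul_intervalIntegral_sq {f : ℝ → ℝ} {a b : ℝ} (hab : a ≤ b)
    (hf : IntervalIntegrable f volume a b)
    (hf2 : IntervalIntegrable (fun s => f s ^ 2) volume a b) :
    (∫ s in a..b, f s) ^ 2 ≤ (b - a) * ∫ s in a..b, f s ^ 2 := by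
  set J := ∫ s in a..b, f s
  set A := ∫ s in a..b, f s ^ 2
  set L := b - a
  -- The variance-type integral `∫ (L f - J)²` is nonnegative and equals `L (L A - J²)`.
  have hexpand : ∫ s in a..b, (L * f s - J) ^ 2 = L * (L * A - J ^ 2) := by
    have hsq (s : ℝ) : (L * f s - J) ^ 2 = L ^ 2 * f s ^ 2 - 2 * L * J * f s + J ^ 2 := by ring
    have hf2' := hf2.const_mul (L ^ 2)
    have hf' := hf.const_mul (2 * L * J)
    simp_rw [hsq]
    rw [integral_add (hf2'.sub hf') intervalIntegrable_const, integral_sub hf2' hf',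
      integral_const_mul, integral_const_mul, integral_const, smul_eq_mul]
    ring
  have hnonneg : 0 ≤ L * (L * A - J ^ 2) :=
    hexpand ▸ integral_nonneg hab fun _ _ => sq_nonneg _
  rcases (sub_nonneg.mpr hab).eq_or_lt with hL | hL
  · simp [J, L, ← hL, show b = a by linarith]
  · nlinarith [nonneg_of_mul_nonneg_right hnonneg hL]

section

variable {E : Type*} [NormedAddCommGroup E] [NormedSpace ℝ E]

theorem norm_intervalIntegral_sub_smul_le {f : ℝ → E} {a b c : ℝ} (hab : a ≤ b)
    (hc : c ∈ Icc a b) (hf : IntervalIntegrable f volume a b) :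
    ‖∫ s in a..b, (c - s) • f s‖ ≤ (b - a) * ∫ s in a..b, ‖f s‖ := by
  rw [← integral_const_mul]
  refine norm_integral_le_of_norm_le hab (MeasureTheory.ae_of_all _ fun s hs => ?_)
    (hf.norm.const_mul _)
  rw [norm_smul, Real.norm_eq_abs]
  gcongr
  exact abs_le.mpr ⟨by linarith [hs.2, hc.1], by linarith [hs.1, hc.2]⟩

variable [CompleteSpace E] {w : ℝ → E}

theorem sub_sub_smul_deriv_eq_intervalIntegral_iteratedDeriv_two (hw : ContDiff ℝ 2 w)
    (a b : ℝ) :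
    w b - w a - (b - a) • deriv w a = ∫ s in a..b, (b - s) • iteratedDeriv 2 w s := by
  have hw' : ContDiff ℝ 1 (deriv w) := (contDiff_succ_iff_deriv.mp hw).2.2
  have hD : iteratedDeriv 2 w = deriv (deriv w) := by
    rw [iteratedDeriv_succ, iteratedDeriv_one]
  have hderiv (s : ℝ) :
      HasDerivAt (fun s => w s + (b - s) • deriv w s) ((b - s) • iteratedDeriv 2 w s) s := by
    have h1 := ((hw.differentiable two_ne_zero) s).hasDerivAt
    have h2 := ((hw'.differentiable one_ne_zero) s).hasDerivAt
    convert h1.add (((hasDerivAt_id s).const_sub b).smul h2) using 1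
    · rfl
    · rw [hD, id]
      module
  rw [integral_eq_sub_of_hasDerivAt (fun s _ => hderiv s)
    (((continuous_const.sub continuous_id).smul
      (hw.continuous_iteratedDeriv 2 le_rfl)).intervalIntegrable a b)]
  simp only [sub_self, zero_smul, add_zero]
  abel

theorem norm_second_difference_le (hw : ContDiff ℝ 2 w) (t : ℝ) {h : ℝ} (hh : 0 ≤ h) :
    ‖w (t + h) - (2 : ℝ) • w t + w (t - h)‖ ≤
      h * ∫ s in (t - h)..(t + h), ‖iteratedDeriv 2 w s‖ := by
  have hD := hw.continuous_iteratedDeriv 2 le_rfl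
  have hdiff : w (t + h) - (2 : ℝ) • w t + w (t - h) =
      (∫ s in t..(t + h), (t + h - s) • iteratedDeriv 2 w s) -
        ∫ s in (t - h)..t, (t - h - s) • iteratedDeriv 2 w s := by
    rw [← sub_sub_smul_deriv_eq_intervalIntegral_iteratedDeriv_two hw, integral_symm,
      ← sub_sub_smul_deriv_eq_intervalIntegral_iteratedDeriv_two hw]
    module
  have hright := norm_intervalIntegral_sub_smul_le (c := t + h) (by linarith)
    ⟨by linarith, le_rfl⟩ (hD.intervalIntegrable t (t + h))
  have hleft := norm_intervalIntegral_sub_smul_le (c := t - h) (by linarith)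
    ⟨le_rfl, by linarith⟩ (hD.intervalIntegrable (t - h) t)
  rw [← integral_add_adjacent_intervals (hD.norm.intervalIntegrable _ t)
    (hD.norm.intervalIntegrable t _), hdiff]
  calc _ ≤ _ := norm_sub_le _ _
    _ ≤ _ := add_le_add hright hleft
    _ = _ := by ring

end

/-- Pointwise consistency bound for the time filter residual. -/
theorem filter_residual_bound :
    ∃ C : ℝ, 0 < C ∧
      ∀ (H : Type) (_ : NormedAddCommGroup H) (_ : InnerProductSpace ℝ H)
        (_ : CompleteSpace H)
        (w : ℝ → H), ContDiff ℝ 2 w →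
        ∀ (t : ℝ) (h : ℝ), 0 < h →
          ‖(1/2 : ℝ) • w (t + h) - w t + (1/2 : ℝ) • w (t - h)‖ ^ 2 ≤
            C * h ^ 3 * ∫ s in (t - h)..(t + h), ‖iteratedDeriv 2 w s‖ ^ 2 := by
  refine ⟨1 / 2, one_half_pos, fun H _ _ _ w hw t h hh => ?_⟩
  have hD := (hw.continuous_iteratedDeriv 2 le_rfl).norm
  set J := ∫ s in (t - h)..(t + h), ‖iteratedDeriv 2 w s‖
  have hresidual :
      ‖(1/2 : ℝ) • w (t + h) - w t + (1/2 : ℝ) • w (t - h)‖ ≤ 1 / 2 * (h * J) := by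
    rw [show (1/2 : ℝ) • w (t + h) - w t + (1/2 : ℝ) • w (t - h) =
        (1/2 : ℝ) • (w (t + h) - (2 : ℝ) • w t + w (t - h)) by module, norm_smul,
      Real.norm_of_nonneg one_half_pos.le]
    gcongr
    exact norm_second_difference_le hw t hh.le
  have hCS := sq_intervalIntegral_le_mul_intervalIntegral_sq (by linarith)
    (hD.intervalIntegrable (t - h) (t + h)) ((hD.pow 2).intervalIntegrable (t - h) (t + h))
  calc _ ≤ (1 / 2 * (h * J)) ^ 2 := by gcongr
    _ = h ^ 2 / 4 * J ^ 2 := by ring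
    _ ≤ h ^ 2 / 4 *
        ((t + h - (t - h)) * ∫ s in (t - h)..(t + h), ‖iteratedDeriv 2 w s‖ ^ 2) := by
      gcongr
    _ = _ := by ring
end

section
/- There exists a constant C > 0 such that for every real Hilbert space H, every three times continuously differentiable function w : ℝ → H, every t ∈ ℝ and every h > 0: ‖ (3 w(t + h) − 4 w(t) + w(t − h)) / (2h) − w'(t + h) ‖² ≤ C h³ ∫_{t−h}^{t+h} ‖w'''(s)‖² ds. -/
/-!
Expand `w` about `t + h` by Taylor's formula with integral remainder. In
`3 w(t+h) - 4 w(t) + w(t-h)` the values cancel, the first-order terms give `2h w'(t+h)` and the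
second-order terms cancel (`4 · h²/2 = (2h)²/2`), so the error of the quotient is `(2h)⁻¹` times
two integral remainders, each at most `O(h²) ∫ ‖w'''‖`. This gives `‖error‖ ≤ 2h ∫ ‖w'''‖`, and
Cauchy–Schwarz on `[t - h, t + h]` turns it into the squared bound with `C = 8`.
-/

open intervalIntegral MeasureTheory

theorem sq_integral_le_mul_integral_sq {g : ℝ → ℝ} {a b : ℝ} (hab : a ≤ b)
    (hg : IntervalIntegrable g volume a b)
    (hg2 : IntervalIntegrable (fun s => g s ^ 2) volume a b) :
    (∫ s in a..b, g s) ^ 2 ≤ (b - a) * ∫ s in a..b, g s ^ 2 := by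
  set J := ∫ s in a..b, g s
  set K := ∫ s in a..b, g s ^ 2
  rcases hab.eq_or_lt with rfl | hlt
  · simp [J]
  have hexpand : ∫ s in a..b, ((b - a) * g s - J) ^ 2 = (b - a) * ((b - a) * K - J ^ 2) := by
    have hsq : (fun s => ((b - a) * g s - J) ^ 2)
        = fun s => (b - a) ^ 2 * g s ^ 2 - 2 * (b - a) * J * g s + J ^ 2 := by
      funext s; ring
    rw [hsq, integral_add ((hg2.const_mul _).sub (hg.const_mul _)) intervalIntegrable_const,
      integral_sub (hg2.const_mul _) (hg.const_mul _), intervalIntegral.integral_const_mul,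
      intervalIntegral.integral_const_mul, intervalIntegral.integral_const, smul_eq_mul]
    ring
  have hnonneg : 0 ≤ ∫ s in a..b, ((b - a) * g s - J) ^ 2 :=
    integral_nonneg hab fun s _ => sq_nonneg _
  rw [hexpand] at hnonneg
  nlinarith [(mul_nonneg_iff_of_pos_left (sub_pos.2 hlt)).1 hnonneg]

variable {E : Type*} [NormedAddCommGroup E] [NormedSpace ℝ E]

theorem norm_integral_sq_smul_le {g : ℝ → E} {x₀ x : ℝ} (hx : x ≤ x₀)
    (hg : IntervalIntegrable g volume x x₀) :
    ‖∫ s in x₀..x, ((x - s) ^ 2 / 2) • g s‖ ≤ ((x₀ - x) ^ 2 / 2) * ∫ s in x..x₀, ‖g s‖ := by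
  rw [integral_symm, norm_neg, ← intervalIntegral.integral_const_mul]
  refine norm_integral_le_of_norm_le hx (Filter.Eventually.of_forall fun s hs => ?_)
    (hg.norm.const_mul _)
  rw [norm_smul, Real.norm_of_nonneg (by positivity)]
  exact mul_le_mul_of_nonneg_right (by nlinarith [hs.1, hs.2]) (norm_nonneg _)

theorem taylor_integral_remainder_two [CompleteSpace E] {f : ℝ → E} (hf : ContDiff ℝ 3 f)
    (x₀ x : ℝ) :
    f x = f x₀ + (x - x₀) • deriv f x₀ + ((x - x₀) ^ 2 / 2) • iteratedDeriv 2 f x₀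
      + ∫ s in x₀..x, ((x - s) ^ 2 / 2) • iteratedDeriv 3 f s := by
  rcases eq_or_ne x₀ x with rfl | hne
  · simp
  have hU : UniqueDiffOn ℝ (Set.uIcc x₀ x) := uniqueDiffOn_uIcc hne
  have hderiv : ∀ k ≤ 3, ∀ s ∈ Set.uIcc x₀ x,
      iteratedDerivWithin k f (Set.uIcc x₀ x) s = iteratedDeriv k f s := fun k hk s hs =>
    iteratedDerivWithin_eq_iteratedDeriv hU (hf.of_le (by exact_mod_cast hk)).contDiffAt hs
  have := taylor_integral_remainder (x₀ := x₀) (x := x) (n := 2) hf.contDiffOn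
  rw [integral_congr fun s hs => by rw [hderiv 3 le_rfl s hs]] at this
  norm_num at this
  rw [← this, hderiv 2 (by norm_num) x₀ Set.left_mem_uIcc,
    (hf.differentiable (by norm_num) x₀).derivWithin (hU x₀ Set.left_mem_uIcc)]
  module

section BDF2

variable [CompleteSpace E] {w : ℝ → E}

theorem bdf2_sub_deriv_eq (hw : ContDiff ℝ 3 w) (t : ℝ) {h : ℝ} (hh : h ≠ 0) :
    (2 * h)⁻¹ • ((3 : ℝ) • w (t + h) - (4 : ℝ) • w t + w (t - h)) - deriv w (t + h) =
      (2 * h)⁻¹ • ((∫ s in (t + h)..(t - h), ((t - h - s) ^ 2 / 2) • iteratedDeriv 3 w s) -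
        (4 : ℝ) • ∫ s in (t + h)..t, ((t - s) ^ 2 / 2) • iteratedDeriv 3 w s) := by
  have hkey : (3 : ℝ) • w (t + h) - (4 : ℝ) • w t + w (t - h) = (2 * h) • deriv w (t + h) +
      ((∫ s in (t + h)..(t - h), ((t - h - s) ^ 2 / 2) • iteratedDeriv 3 w s) -
        (4 : ℝ) • ∫ s in (t + h)..t, ((t - s) ^ 2 / 2) • iteratedDeriv 3 w s) := by
    rw [taylor_integral_remainder_two hw (t + h) t,
      taylor_integral_remainder_two hw (t + h) (t - h),
      show t - (t + h) = -h by ring, show t - h - (t + h) = -(2 * h) by ring]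
    module
  rw [hkey, smul_add, smul_smul, inv_mul_cancel₀ (mul_ne_zero two_ne_zero hh), one_smul,
    add_sub_cancel_left]

theorem norm_bdf2_sub_deriv_le (hw : ContDiff ℝ 3 w) (t : ℝ) {h : ℝ} (hh : 0 < h) :
    ‖(2 * h)⁻¹ • ((3 : ℝ) • w (t + h) - (4 : ℝ) • w t + w (t - h)) - deriv w (t + h)‖ ≤
      2 * h * ∫ s in (t - h)..(t + h), ‖iteratedDeriv 3 w s‖ := by
  set J := ∫ s in (t - h)..(t + h), ‖iteratedDeriv 3 w s‖
  have hw3 : Continuous (iteratedDeriv 3 w) := hw.continuous_iteratedDeriv 3 le_rfl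
  have hR₁ : ‖∫ s in (t + h)..t, ((t - s) ^ 2 / 2) • iteratedDeriv 3 w s‖ ≤ h ^ 2 / 2 * J :=
    calc _ ≤ ((t + h - t) ^ 2 / 2) * ∫ s in t..(t + h), ‖iteratedDeriv 3 w s‖ :=
          norm_integral_sq_smul_le (by linarith) (hw3.intervalIntegrable _ _)
      _ ≤ h ^ 2 / 2 * J := by
          rw [add_sub_cancel_left]
          gcongr
          exact integral_mono_interval (by linarith) (by linarith) le_rfl
            (Filter.Eventually.of_forall fun s => norm_nonneg _) (hw3.norm.intervalIntegrable _ _)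
  have hR₂ : ‖∫ s in (t + h)..(t - h), ((t - h - s) ^ 2 / 2) • iteratedDeriv 3 w s‖ ≤
      2 * h ^ 2 * J :=
    (norm_integral_sq_smul_le (by linarith) (hw3.intervalIntegrable _ _)).trans_eq (by ring)
  rw [bdf2_sub_deriv_eq hw t hh.ne', norm_smul, norm_inv, Real.norm_of_nonneg (by positivity)]
  calc _ ≤ (2 * h)⁻¹ * (2 * h ^ 2 * J + 4 * (h ^ 2 / 2 * J)) := by
        gcongr
        refine (norm_sub_le _ _).trans ?_
        rw [norm_smul, Real.norm_ofNat]
        gcongr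
    _ = 2 * h * J := by field_simp; ring

end BDF2

/-- Pointwise consistency bound for the BDF2 difference quotient. -/
theorem bdf2_quotient_bound :
    ∃ C : ℝ, 0 < C ∧
      ∀ (H : Type) (_ : NormedAddCommGroup H) (_ : InnerProductSpace ℝ H)
        (_ : CompleteSpace H)
        (w : ℝ → H), ContDiff ℝ 3 w →
        ∀ (t : ℝ) (h : ℝ), 0 < h →
          ‖(2 * h)⁻¹ • ((3 : ℝ) • w (t + h) - (4 : ℝ) • w t + w (t - h)) -
              deriv w (t + h)‖ ^ 2 ≤
            C * h ^ 3 * ∫ s in (t - h)..(t + h), ‖iteratedDeriv 3 w s‖ ^ 2 := by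
  refine ⟨8, by norm_num, fun H _ _ _ w hw t h hh => ?_⟩
  have hw3 : Continuous (iteratedDeriv 3 w) := hw.continuous_iteratedDeriv 3 le_rfl
  have hCS := sq_integral_le_mul_integral_sq (a := t - h) (b := t + h) (by linarith)
    (hw3.norm.intervalIntegrable _ _) ((hw3.norm.pow 2).intervalIntegrable _ _)
  calc _ ≤ (2 * h * ∫ s in (t - h)..(t + h), ‖iteratedDeriv 3 w s‖) ^ 2 :=
        pow_le_pow_left₀ (norm_nonneg _) (norm_bdf2_sub_deriv_le hw t hh) 2
    _ ≤ 4 * h ^ 2 *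
          ((t + h - (t - h)) * ∫ s in (t - h)..(t + h), ‖iteratedDeriv 3 w s‖ ^ 2) := by
        rw [mul_pow, mul_pow]; gcongr; norm_num
    _ = 8 * h ^ 3 * ∫ s in (t - h)..(t + h), ‖iteratedDeriv 3 w s‖ ^ 2 := by ring
end
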